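/- Let 0 < q < p ≤ 1, n ≥ 1, and α, β ≥ 0. For the (p,q)-Bernstein-Stancu operator S_{n,p,q}, applied to the identity function f(t) = t, one has S_{n,p,q}(t; x) = ([n]_{p,q} x + α)/([n]_{p,q} + β) for all x ∈ [0,1]. -/

import Mathlib

open Finset Filter

noncomputable def pqInt (p q : ℝ) (n : ℕ) : ℝ := ∑ i ∈ Finset.range n, p ^ (n - 1 - i) * q ^ i

noncomputable def pqFact (p q : ℝ) (n : ℕ) : ℝ := ∏ j ∈ Finset.range n, pqInt p q (j + 1)

noncomputable def pqChoose (p q : ℝ) (n k : ℕ) : ℝ :=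
  pqFact p q n / (pqFact p q k * pqFact p q (n - k))

noncomputable def pqBasis (p q : ℝ) (n k : ℕ) (x : ℝ) : ℝ :=
  (1 / p ^ (n * (n - 1) / 2)) * pqChoose p q n k * p ^ (k * (k - 1) / 2) * x ^ k *
    ∏ s ∈ Finset.range (n - k), (p ^ s - q ^ s * x)

noncomputable def S (p q α β : ℝ) (n : ℕ) (f : ℝ → ℝ) (x : ℝ) : ℝ :=
  ∑ k ∈ Finset.range (n + 1),
    pqBasis p q n k x * f ((p ^ (n - k) * pqInt p q k + α) / (pqInt p q n + β))

/-!
Both the constant function and the identity are reproduced by the (p,q)-Bernstein basis: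
`∑ₖ b_{n,k}(x) = 1` and `∑ₖ b_{n,k}(x) p^{n-k} [k] = [n] x`. The first is the (p,q)-binomial
theorem, proved by induction on `n` through the (p,q)-Pascal rule; the second reduces to the
first at `n - 1` through the absorption identity `[k+1] C(n+1,k+1) = [n+1] C(n,k)`. The
theorem follows by linearity of the sum.
-/

lemma Finset.sum_range_succ_succ_of_pascal {M : Type*} [AddCommMonoid M] (f g h : ℕ → M)
    (m : ℕ) (h_zero : h 0 = f 0) (h_succ : ∀ k < m, h (k + 1) = f (k + 1) + g k)
    (h_last : h (m + 1) = g m) :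
    ∑ k ∈ range (m + 2), h k = ∑ k ∈ range (m + 1), (f k + g k) := by
  rw [sum_range_succ h (m + 1), sum_range_succ' h m, h_zero, h_last, sum_add_distrib,
    sum_range_succ' f m, sum_range_succ g m,
    sum_congr rfl fun k hk => h_succ k (mem_range.1 hk), sum_add_distrib]
  abel

section PQCalculus

variable {p q : ℝ}

lemma pqInt_zero (p q : ℝ) : pqInt p q 0 = 0 := by simp [pqInt]

lemma pqInt_add (p q : ℝ) (a b : ℕ) :
    pqInt p q (a + b) = p ^ b * pqInt p q a + q ^ a * pqInt p q b := by
  rw [pqInt, sum_range_add, pqInt, pqInt, mul_sum, mul_sum]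
  congr 1 <;> refine sum_congr rfl fun i hi => ?_ <;> have := mem_range.1 hi
  · rw [show a + b - 1 - i = b + (a - 1 - i) by omega, pow_add]; ring
  · rw [show a + b - 1 - (a + i) = b - 1 - i by omega, pow_add]; ring

lemma pqInt_pos (hp : 0 < p) (hq : 0 < q) {n : ℕ} (hn : n ≠ 0) : 0 < pqInt p q n :=
  sum_pos (fun _ _ => by positivity) ⟨0, mem_range.2 (Nat.pos_of_ne_zero hn)⟩

lemma pqFact_zero (p q : ℝ) : pqFact p q 0 = 1 := prod_range_zero _

lemma pqFact_succ (p q : ℝ) (n : ℕ) : pqFact p q (n + 1) = pqFact p q n * pqInt p q (n + 1) :=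
  prod_range_succ _ _

lemma pqFact_pos (hp : 0 < p) (hq : 0 < q) (n : ℕ) : 0 < pqFact p q n :=
  prod_pos fun j _ => pqInt_pos hp hq j.succ_ne_zero

lemma pqChoose_zero_right (hp : 0 < p) (hq : 0 < q) (n : ℕ) : pqChoose p q n 0 = 1 := by
  rw [pqChoose, pqFact_zero, one_mul, Nat.sub_zero, div_self (pqFact_pos hp hq n).ne']

lemma pqChoose_self (hp : 0 < p) (hq : 0 < q) (n : ℕ) : pqChoose p q n n = 1 := by
  rw [pqChoose, Nat.sub_self, pqFact_zero, mul_one, div_self (pqFact_pos hp hq n).ne']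

lemma pqChoose_succ_succ (hp : 0 < p) (hq : 0 < q) {m k : ℕ} (hk : k < m) :
    pqChoose p q (m + 1) (k + 1) = p ^ (k + 1) * pqChoose p q m (k + 1) +
      q ^ (m - k) * pqChoose p q m k := by
  obtain ⟨a, rfl⟩ : ∃ a, m = k + 1 + a := ⟨m - (k + 1), by omega⟩
  have hsplit := pqInt_add p q (a + 1) (k + 1)
  rw [show a + 1 + (k + 1) = k + 1 + a + 1 by omega] at hsplit
  simp only [pqChoose, show k + 1 + a + 1 - (k + 1) = a + 1 by omega,
    show k + 1 + a - (k + 1) = a by omega, show k + 1 + a - k = a + 1 by omega,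
    pqFact_succ p q (k + 1 + a), pqFact_succ p q k, pqFact_succ p q a]
  have := (pqFact_pos hp hq k).ne'
  have := (pqFact_pos hp hq a).ne'
  have := (pqInt_pos hp hq k.succ_ne_zero).ne'
  have := (pqInt_pos hp hq a.succ_ne_zero).ne'
  field_simp
  linear_combination pqFact p q (k + 1 + a) * hsplit

lemma pqInt_succ_mul_pqChoose_succ (hp : 0 < p) (hq : 0 < q) {m k : ℕ} (hk : k ≤ m) :
    pqInt p q (k + 1) * pqChoose p q (m + 1) (k + 1) = pqInt p q (m + 1) * pqChoose p q m k := by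
  rw [pqChoose, pqChoose, pqFact_succ p q m, pqFact_succ p q k,
    show m + 1 - (k + 1) = m - k by omega]
  have := (pqFact_pos hp hq k).ne'
  have := (pqFact_pos hp hq (m - k)).ne'
  have := (pqInt_pos hp hq k.succ_ne_zero).ne'
  field_simp

end PQCalculus

section PQBernstein

variable {p q : ℝ} (x : ℝ)

noncomputable def pqMonomial (p q : ℝ) (n k : ℕ) (x : ℝ) : ℝ :=
  p ^ (k * (k - 1) / 2) * x ^ k * ∏ s ∈ range (n - k), (p ^ s - q ^ s * x)

lemma pqBasis_eq (p q : ℝ) (n k : ℕ) :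
    pqBasis p q n k x = pqChoose p q n k * pqMonomial p q n k x / p ^ (n * (n - 1) / 2) := by
  rw [pqBasis, pqMonomial]
  ring

lemma pqMonomial_succ_left (p q : ℝ) {m k : ℕ} (hk : k ≤ m) :
    pqMonomial p q (m + 1) k x = pqMonomial p q m k x * (p ^ (m - k) - q ^ (m - k) * x) := by
  rw [pqMonomial, pqMonomial, show m + 1 - k = m - k + 1 by omega, prod_range_succ]
  ring

lemma pqMonomial_succ_succ (p q : ℝ) (m k : ℕ) :
    pqMonomial p q (m + 1) (k + 1) x = p ^ k * x * pqMonomial p q m k x := by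
  rw [pqMonomial, pqMonomial, Nat.triangle_succ, Nat.add_sub_add_right, pow_add]
  ring

lemma sum_pqChoose_mul_pqMonomial (hp : 0 < p) (hq : 0 < q) (n : ℕ) :
    ∑ k ∈ range (n + 1), pqChoose p q n k * pqMonomial p q n k x = p ^ (n * (n - 1) / 2) := by
  induction n with
  | zero => simp [pqChoose_zero_right hp hq, pqMonomial]
  | succ m ih =>
    have hrow : ∀ k ∈ range (m + 1),
        p ^ k * pqChoose p q m k * pqMonomial p q (m + 1) k x +
          q ^ (m - k) * pqChoose p q m k * pqMonomial p q (m + 1) (k + 1) x =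
        p ^ m * (pqChoose p q m k * pqMonomial p q m k x) := by
      intro k hk
      have hk := Nat.lt_succ_iff.1 (mem_range.1 hk)
      have hpow : p ^ k * p ^ (m - k) = p ^ m := by rw [← pow_add, Nat.add_sub_cancel' hk]
      rw [pqMonomial_succ_left x p q hk, pqMonomial_succ_succ]
      linear_combination pqChoose p q m k * pqMonomial p q m k x * hpow
    rw [Finset.sum_range_succ_succ_of_pascal
        (fun k => p ^ k * pqChoose p q m k * pqMonomial p q (m + 1) k x)
        (fun k => q ^ (m - k) * pqChoose p q m k * pqMonomial p q (m + 1) (k + 1) x) _ m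
        (by simp [pqChoose_zero_right hp hq])
        (fun k hk => by simp only [pqChoose_succ_succ hp hq hk]; ring)
        (by simp [pqChoose_self hp hq]),
      sum_congr rfl hrow, ← mul_sum, ih, Nat.triangle_succ, pow_add]
    ring

lemma sum_pqChoose_mul_pqMonomial_mul_node (hp : 0 < p) (hq : 0 < q) (n : ℕ) :
    ∑ k ∈ range (n + 1), pqChoose p q n k * pqMonomial p q n k x * (p ^ (n - k) * pqInt p q k) =
      p ^ (n * (n - 1) / 2) * (pqInt p q n * x) := by
  cases n with
  | zero => simp [pqInt_zero]
  | succ m =>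
    have hterm : ∀ k ∈ range (m + 1),
        pqChoose p q (m + 1) (k + 1) * pqMonomial p q (m + 1) (k + 1) x *
            (p ^ (m + 1 - (k + 1)) * pqInt p q (k + 1)) =
          pqInt p q (m + 1) * x * p ^ m * (pqChoose p q m k * pqMonomial p q m k x) := by
      intro k hk
      have hk := Nat.lt_succ_iff.1 (mem_range.1 hk)
      have habsorb := pqInt_succ_mul_pqChoose_succ hp hq hk
      have hpow : p ^ k * p ^ (m - k) = p ^ m := by rw [← pow_add, Nat.add_sub_cancel' hk]
      rw [pqMonomial_succ_succ, Nat.add_sub_add_right]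
      linear_combination p ^ k * p ^ (m - k) * x * pqMonomial p q m k x * habsorb
        + pqInt p q (m + 1) * x * pqChoose p q m k * pqMonomial p q m k x * hpow
    rw [sum_range_succ', sum_congr rfl hterm, ← mul_sum, sum_pqChoose_mul_pqMonomial x hp hq,
      pqInt_zero, Nat.triangle_succ, pow_add]
    ring

lemma sum_pqBasis (hp : 0 < p) (hq : 0 < q) (n : ℕ) :
    ∑ k ∈ range (n + 1), pqBasis p q n k x = 1 := by
  simp_rw [pqBasis_eq, ← sum_div, sum_pqChoose_mul_pqMonomial x hp hq]
  exact div_self (by positivity)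

lemma sum_pqBasis_mul_node (hp : 0 < p) (hq : 0 < q) (n : ℕ) :
    ∑ k ∈ range (n + 1), pqBasis p q n k x * (p ^ (n - k) * pqInt p q k) = pqInt p q n * x := by
  simp_rw [pqBasis_eq, div_mul_eq_mul_div, ← sum_div, sum_pqChoose_mul_pqMonomial_mul_node x hp hq]
  exact mul_div_cancel_left₀ _ (by positivity)

end PQBernstein

theorem S_id_general (p q α β : ℝ) (hq : 0 < q) (hqp : q < p) (n : ℕ)
    (x : ℝ) :
    S p q α β n (fun t => t) x = (pqInt p q n * x + α) / (pqInt p q n + β) := by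
  have hp : 0 < p := hq.trans hqp
  calc S p q α β n (fun t => t) x
      = (∑ k ∈ range (n + 1), pqBasis p q n k x * (p ^ (n - k) * pqInt p q k) +
          α * ∑ k ∈ range (n + 1), pqBasis p q n k x) / (pqInt p q n + β) := by
        simp only [S, mul_sum, ← sum_add_distrib, sum_div]
        exact sum_congr rfl fun k _ => by ring
    _ = (pqInt p q n * x + α) / (pqInt p q n + β) := by
        rw [sum_pqBasis_mul_node x hp hq, sum_pqBasis x hp hq, mul_one]

theorem S_id (p q α β : ℝ) (hq : 0 < q) (hqp : q < p) (hp : p ≤ 1)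
    (hα : 0 ≤ α) (hβ : 0 ≤ β) (n : ℕ) (hn : 1 ≤ n)
    (x : ℝ) (hx : x ∈ Set.Icc (0 : ℝ) 1) :
    S p q α β n (fun t => t) x = (pqInt p q n * x + α) / (pqInt p q n + β) :=
  S_id_general p q α β hq hqp n x
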